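/- For the cycle graph Cₙ on n ≥ 3 vertices, the F-coindices of the derived graphs are: F̄(L(Cₙ)) = 4n(n-3), F̄(S(Cₙ)) = 8n(2n-3), F̄(T₁(Cₙ)) = 4n(10n-23), F̄(T₂(Cₙ)) = 4n(10n-23), F̄(T(Cₙ)) = 32n(2n-5), F̄(PL(Cₙ)) = 8n(2n-3). -/

import Mathlib

open SimpleGraph Finset
open scoped Classical

noncomputable section
namespace Paper

variable {V : Type*} [Fintype V]

/-- Degree as an integer. -/
def d (G : SimpleGraph V) (v : V) : ℤ := G.degree v

/-- Number of edges. -/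
def m (G : SimpleGraph V) : ℤ := G.edgeFinset.card

/-- Sum over unordered edges of a symmetric vertex-pair function. -/
def edgeSum (G : SimpleGraph V) (f : V → V → ℤ) (hf : ∀ u v, f u v = f v u) : ℤ :=
  ∑ e ∈ G.edgeFinset, Sym2.lift ⟨f, hf⟩ e

/-- First Zagreb index. -/
def M1 (G : SimpleGraph V) : ℤ := ∑ v, d G v ^ 2

/-- Second Zagreb index. -/
def M2 (G : SimpleGraph V) : ℤ :=
  edgeSum G (fun u v => d G u * d G v) (by intros; ring)

/-- F-index. -/
def F (G : SimpleGraph V) : ℤ := ∑ v, d G v ^ 3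

/-- ξ₄. -/
def xi4 (G : SimpleGraph V) : ℤ := ∑ v, d G v ^ 4

/-- Redefined third Zagreb index. -/
def ReZG3 (G : SimpleGraph V) : ℤ :=
  edgeSum G (fun u v => d G u * d G v * (d G u + d G v)) (by intros; ring)

/-- F-coindex: sum over edges of the complement with degrees in G. -/
def Fbar (G : SimpleGraph V) : ℤ :=
  edgeSum Gᶜ (fun u v => d G u ^ 2 + d G v ^ 2) (by intros; ring)

/-- Subdivision graph. -/
def subdivision (G : SimpleGraph V) : SimpleGraph (V ⊕ G.edgeSet) where
  Adj x y :=
    match x, y with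
    | Sum.inl u, Sum.inr e => u ∈ (e : Sym2 V)
    | Sum.inr e, Sum.inl u => u ∈ (e : Sym2 V)
    | _, _ => False
  symm := by constructor; rintro (u | e) (v | f) h <;> first | exact h | exact h.elim
  loopless := by constructor; rintro (u | e) <;> simp

/-- Vertex-semitotal graph. -/
def vertexSemitotal (G : SimpleGraph V) : SimpleGraph (V ⊕ G.edgeSet) where
  Adj x y :=
    match x, y with
    | Sum.inl u, Sum.inl v => G.Adj u v
    | Sum.inl u, Sum.inr e => u ∈ (e : Sym2 V)
    | Sum.inr e, Sum.inl u => u ∈ (e : Sym2 V)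
    | _, _ => False
  symm := by
    constructor
    rintro (u | e) (v | f) h
    · exact G.adj_symm h
    · exact h
    · exact h
    · exact h.elim
  loopless := by
    constructor
    rintro (u | e) h
    · exact G.loopless.irrefl u h
    · exact h

/-- Edge-semitotal graph. -/
def edgeSemitotal (G : SimpleGraph V) : SimpleGraph (V ⊕ G.edgeSet) where
  Adj x y :=
    match x, y with
    | Sum.inl u, Sum.inr e => u ∈ (e : Sym2 V)
    | Sum.inr e, Sum.inl u => u ∈ (e : Sym2 V)
    | Sum.inr e, Sum.inr f => e ≠ f ∧ ∃ v, v ∈ (e : Sym2 V) ∧ v ∈ (f : Sym2 V)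
    | _, _ => False
  symm := by
    constructor
    rintro (u | e) (v | f) h
    · exact h.elim
    · exact h
    · exact h
    · obtain ⟨hne, w, h1, h2⟩ := h
      exact ⟨hne.symm, w, h2, h1⟩
  loopless := by
    constructor
    rintro (u | e) h
    · exact h
    · exact h.1 rfl

/-- Total graph. -/
def total (G : SimpleGraph V) : SimpleGraph (V ⊕ G.edgeSet) where
  Adj x y :=
    match x, y with
    | Sum.inl u, Sum.inl v => G.Adj u v
    | Sum.inl u, Sum.inr e => u ∈ (e : Sym2 V)
    | Sum.inr e, Sum.inl u => u ∈ (e : Sym2 V)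
    | Sum.inr e, Sum.inr f => e ≠ f ∧ ∃ v, v ∈ (e : Sym2 V) ∧ v ∈ (f : Sym2 V)
  symm := by
    constructor
    rintro (u | e) (v | f) h
    · exact G.adj_symm h
    · exact h
    · exact h
    · obtain ⟨hne, w, h1, h2⟩ := h
      exact ⟨hne.symm, w, h2, h1⟩
  loopless := by
    constructor
    rintro (u | e) h
    · exact G.loopless.irrefl u h
    · exact h.1 rfl

/-- Paraline graph: line graph of the subdivision graph. -/
def paraline (G : SimpleGraph V) : SimpleGraph (subdivision G).edgeSet :=
  (subdivision G).lineGraph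

/-! The F-coindex of `H` on `N` vertices equals `∑ v, (N - 1 - d v) * d v ^ 2`: the term `d v ^ 2`
is counted once for each of the `N - 1 - d v` non-neighbours of `v`. So it only depends on the
degree sequence. `L(Cₙ)` is 2-regular on `n` vertices; the other five graphs have `2n` vertices,
`S(Cₙ)` and `PL(Cₙ)` being 2-regular and `T(Cₙ)` 4-regular, while `T₁(Cₙ)` (resp. `T₂(Cₙ)`) has
degree 4 on the `n` old vertices (resp. the `n` edge vertices) and degree 2 on the others. -/

lemma sum_mem_eq_lift_add_of_not_isDiag (g : V → ℤ) {e : Sym2 V} (he : ¬e.IsDiag) :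
    ∑ w with w ∈ e, g w = Sym2.lift ⟨fun u v => g u + g v, fun _ _ => add_comm _ _⟩ e := by
  induction e using Sym2.ind with
  | _ u v =>
    have huv : u ≠ v := by simpa using he
    have hmem : ({w | w ∈ s(u, v)} : Finset V) = {u, v} := by ext; simp
    rw [hmem, sum_pair huv, Sym2.lift_mk]

lemma edgeSum_add_eq_sum_degree_mul (H : SimpleGraph V) (g : V → ℤ) :
    edgeSum H (fun u v => g u + g v) (fun _ _ => add_comm _ _) =
      ∑ v, (H.degree v : ℤ) * g v :=
  calc edgeSum H (fun u v => g u + g v) (fun _ _ => add_comm _ _)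
      = ∑ e ∈ H.edgeFinset, ∑ v, if v ∈ e then g v else 0 := by
        refine sum_congr rfl fun e he => ?_
        rw [← sum_filter, sum_mem_eq_lift_add_of_not_isDiag g
          (H.not_isDiag_of_mem_edgeSet (mem_edgeFinset.mp he))]
    _ = ∑ v, #(H.incidenceFinset v) • g v := by
        rw [sum_comm]
        refine sum_congr rfl fun v _ => ?_
        rw [← sum_filter, incidenceFinset_eq_filter, sum_const]
    _ = ∑ v, (H.degree v : ℤ) * g v := by simp [card_incidenceFinset_eq_degree]

lemma Fbar_eq_sum (H : SimpleGraph V) :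
    Fbar H = ∑ v, ((Fintype.card V : ℤ) - 1 - d H v) * d H v ^ 2 := by
  rw [Fbar, edgeSum_add_eq_sum_degree_mul Hᶜ (fun v => d H v ^ 2)]
  refine sum_congr rfl fun v _ => ?_
  have := H.degree_lt_card_verts v
  rw [degree_compl, d]
  congr 1
  omega

lemma Fbar_of_isRegularOfDegree {H : SimpleGraph V} {k : ℕ} (h : H.IsRegularOfDegree k) :
    Fbar H = Fintype.card V * ((Fintype.card V - 1 - k) * (k : ℤ) ^ 2) := by
  simp [Fbar_eq_sum, d, h.degree_eq]

section SumType

variable {α β : Type*} [Fintype α] [Fintype β] {H : SimpleGraph (α ⊕ β)}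

lemma Fbar_of_degree_inl_inr {p q : ℕ} (hp : ∀ a, H.degree (.inl a) = p)
    (hq : ∀ b, H.degree (.inr b) = q) :
    Fbar H = Fintype.card α * ((Fintype.card α + Fintype.card β - 1 - p) * (p : ℤ) ^ 2) +
      Fintype.card β * ((Fintype.card α + Fintype.card β - 1 - q) * (q : ℤ) ^ 2) := by
  simp [Fbar_eq_sum, Fintype.sum_sum_type, d, hp, hq]

lemma degree_eq_card_add_card {x : α ⊕ β} (p : α → Prop) (q : β → Prop) [DecidablePred p]
    [DecidablePred q] (hp : ∀ a, H.Adj x (.inl a) ↔ p a) (hq : ∀ b, H.Adj x (.inr b) ↔ q b) :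
    H.degree x = #{a | p a} + #{b | q b} := by
  rw [← card_neighborFinset_eq_degree, neighborFinset_eq_filter, ← card_disjSum]
  congr 1
  ext (a | b) <;> simp [hp, hq]

end SumType

section Incidence

variable (G : SimpleGraph V)

lemma card_mem_edge_eq_two (e : G.edgeSet) : #{v | v ∈ (e : Sym2 V)} = 2 := by
  rw [← Sym2.card_toFinset_of_not_isDiag _ (G.not_isDiag_of_mem_edgeSet e.2)]
  congr 1
  ext
  simp

variable [DecidableRel G.Adj]

lemma card_edgeSet_mem_eq_degree (v : V) : #{e : G.edgeSet | v ∈ (e : Sym2 V)} = G.degree v := by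
  rw [← card_incidenceFinset_eq_degree, incidenceFinset_eq_filter]
  refine card_bij (fun e _ => e) (fun e he => by simpa using he)
    (fun _ _ _ _ => Subtype.ext) fun e he => ?_
  simp only [mem_filter, mem_edgeFinset] at he
  exact ⟨⟨e, he.1⟩, by simpa using he.2, rfl⟩

lemma lineGraph_degree_add_two {u v : V} (h : G.Adj u v) :
    G.lineGraph.degree ⟨s(u, v), h⟩ + 2 = G.degree u + G.degree v := by
  have hinter : G.incidenceFinset u ∩ G.incidenceFinset v = {s(u, v)} := by
    rw [← coe_inj, coe_inter, coe_incidenceFinset, coe_incidenceFinset, coe_singleton,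
      G.incidenceSet_inter_incidenceSet_of_adj h]
  have hmem : s(u, v) ∈ G.incidenceFinset u ∪ G.incidenceFinset v := by simp [h]
  have hnbr : (G.lineGraph.neighborFinset ⟨s(u, v), h⟩).map (.subtype _) =
      (G.incidenceFinset u ∪ G.incidenceFinset v).erase s(u, v) := by
    ext e
    simp only [mem_map, mem_neighborFinset, lineGraph_adj_iff_exists, Sym2.mem_iff,
      Function.Embedding.coe_subtype, mem_erase, mem_union, mem_incidenceFinset]
    constructor
    · rintro ⟨f, ⟨hne, w, rfl | rfl, hw⟩, rfl⟩
      · exact ⟨fun h' => hne (Subtype.ext h'.symm), .inl ⟨f.2, hw⟩⟩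
      · exact ⟨fun h' => hne (Subtype.ext h'.symm), .inr ⟨f.2, hw⟩⟩
    · rintro ⟨hne, ⟨he, hu⟩ | ⟨he, hv⟩⟩
      · exact ⟨⟨e, he⟩, ⟨fun h' => hne (congrArg Subtype.val h').symm, u, .inl rfl, hu⟩, rfl⟩
      · exact ⟨⟨e, he⟩, ⟨fun h' => hne (congrArg Subtype.val h').symm, v, .inr rfl, hv⟩, rfl⟩
  have := card_union_add_card_inter (G.incidenceFinset u) (G.incidenceFinset v)
  rw [hinter, card_singleton, card_incidenceFinset_eq_degree, card_incidenceFinset_eq_degree,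
    ← card_erase_add_one hmem, ← hnbr, card_map, card_neighborFinset_eq_degree] at this
  omega

lemma _root_.SimpleGraph.IsRegularOfDegree.lineGraph {k : ℕ} (hG : G.IsRegularOfDegree k) :
    G.lineGraph.IsRegularOfDegree (2 * k - 2) := by
  rintro ⟨e, he⟩
  induction e using Sym2.ind with
  | _ u v =>
    have := lineGraph_degree_add_two G he
    rw [hG.degree_eq, hG.degree_eq] at this
    dsimp only at this
    omega

lemma _root_.SimpleGraph.IsRegularOfDegree.two_mul_card_edgeSet {k : ℕ}
    (hG : G.IsRegularOfDegree k) : 2 * Fintype.card G.edgeSet = Fintype.card V * k := by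
  rw [← edgeFinset_card, ← sum_degrees_eq_twice_card_edges]
  simp [hG.degree_eq, mul_comm]

end Incidence

section Derived

variable (G : SimpleGraph V) [DecidableRel G.Adj]

@[simp] lemma subdivision_degree_inl (v : V) :
    (subdivision G).degree (.inl v) = G.degree v := by
  rw [degree_eq_card_add_card (fun _ => False) (v ∈ ·.1) (fun _ => Iff.rfl) (fun _ => Iff.rfl)]
  simp [card_edgeSet_mem_eq_degree]

@[simp] lemma subdivision_degree_inr (e : G.edgeSet) : (subdivision G).degree (.inr e) = 2 := by
  rw [degree_eq_card_add_card (· ∈ e.1) (fun _ => False) (fun _ => Iff.rfl) (fun _ => Iff.rfl)]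
  simp [card_mem_edge_eq_two]

@[simp] lemma vertexSemitotal_degree_inl (v : V) :
    (vertexSemitotal G).degree (.inl v) = 2 * G.degree v := by
  rw [degree_eq_card_add_card (G.Adj v) (v ∈ ·.1) (fun _ => Iff.rfl) (fun _ => Iff.rfl),
    card_edgeSet_mem_eq_degree, ← card_neighborFinset_eq_degree, neighborFinset_eq_filter, two_mul]

@[simp] lemma vertexSemitotal_degree_inr (e : G.edgeSet) :
    (vertexSemitotal G).degree (.inr e) = 2 := by
  rw [degree_eq_card_add_card (· ∈ e.1) (fun _ => False) (fun _ => Iff.rfl) (fun _ => Iff.rfl)]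
  simp [card_mem_edge_eq_two]

@[simp] lemma edgeSemitotal_degree_inl (v : V) :
    (edgeSemitotal G).degree (.inl v) = G.degree v := by
  rw [degree_eq_card_add_card (fun _ => False) (v ∈ ·.1) (fun _ => Iff.rfl) (fun _ => Iff.rfl)]
  simp [card_edgeSet_mem_eq_degree]

@[simp] lemma edgeSemitotal_degree_inr (e : G.edgeSet) :
    (edgeSemitotal G).degree (.inr e) = 2 + G.lineGraph.degree e := by
  rw [degree_eq_card_add_card (· ∈ e.1) (G.lineGraph.Adj e) (fun _ => Iff.rfl)
    (fun _ => lineGraph_adj_iff_exists.symm), card_mem_edge_eq_two, ← card_neighborFinset_eq_degree,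
    neighborFinset_eq_filter]

@[simp] lemma total_degree_inl (v : V) : (total G).degree (.inl v) = 2 * G.degree v := by
  rw [degree_eq_card_add_card (G.Adj v) (v ∈ ·.1) (fun _ => Iff.rfl) (fun _ => Iff.rfl),
    card_edgeSet_mem_eq_degree, ← card_neighborFinset_eq_degree, neighborFinset_eq_filter, two_mul]

@[simp] lemma total_degree_inr (e : G.edgeSet) :
    (total G).degree (.inr e) = 2 + G.lineGraph.degree e := by
  rw [degree_eq_card_add_card (· ∈ e.1) (G.lineGraph.Adj e) (fun _ => Iff.rfl)
    (fun _ => lineGraph_adj_iff_exists.symm), card_mem_edge_eq_two, ← card_neighborFinset_eq_degree,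
    neighborFinset_eq_filter]

lemma _root_.SimpleGraph.IsRegularOfDegree.subdivision (hG : G.IsRegularOfDegree 2) :
    (subdivision G).IsRegularOfDegree 2 := by
  rintro (v | e) <;> simp [hG.degree_eq]

end Derived

lemma cycleGraph_isRegularOfDegree_two {n : ℕ} (hn : 3 ≤ n) :
    (cycleGraph n).IsRegularOfDegree 2 := by
  obtain ⟨m, rfl⟩ : ∃ m, n = m + 3 := ⟨n - 3, by omega⟩
  intro v
  convert cycleGraph_degree_three_le

theorem stmt19 (n : ℕ) (hn : 3 ≤ n) :
    Fbar (cycleGraph n).lineGraph = 4 * n * ((n : ℤ) - 3) ∧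
    Fbar (subdivision (cycleGraph n)) = 8 * n * (2 * (n : ℤ) - 3) ∧
    Fbar (vertexSemitotal (cycleGraph n)) = 4 * n * (10 * (n : ℤ) - 23) ∧
    Fbar (edgeSemitotal (cycleGraph n)) = 4 * n * (10 * (n : ℤ) - 23) ∧
    Fbar (total (cycleGraph n)) = 32 * n * (2 * (n : ℤ) - 5) ∧
    Fbar (paraline (cycleGraph n)) = 8 * n * (2 * (n : ℤ) - 3) := by
  have hC := cycleGraph_isRegularOfDegree_two hn
  have hS := hC.subdivision
  have hE : Fintype.card (cycleGraph n).edgeSet = n := by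
    have := hC.two_mul_card_edgeSet
    rw [Fintype.card_fin] at this
    omega
  have hES : Fintype.card (subdivision (cycleGraph n)).edgeSet = 2 * n := by
    have := hS.two_mul_card_edgeSet
    rw [Fintype.card_sum, Fintype.card_fin, hE] at this
    omega
  have hL := hC.lineGraph.degree_eq
  refine ⟨?_, ?_, ?_, ?_, ?_, ?_⟩
  · rw [Fbar_of_isRegularOfDegree hC.lineGraph, hE]
    push_cast
    ring
  · rw [Fbar_of_isRegularOfDegree hS, Fintype.card_sum, Fintype.card_fin, hE]
    push_cast
    ring
  · rw [Fbar_of_degree_inl_inr (p := 4) (q := 2) (by simp [hC.degree_eq]) (by simp),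
      Fintype.card_fin, hE]
    ring
  · rw [Fbar_of_degree_inl_inr (p := 2) (q := 4) (by simp [hC.degree_eq]) (by simp [hL]),
      Fintype.card_fin, hE]
    ring
  · rw [Fbar_of_degree_inl_inr (p := 4) (q := 4) (by simp [hC.degree_eq]) (by simp [hL]),
      Fintype.card_fin, hE]
    ring
  · rw [paraline, Fbar_of_isRegularOfDegree hS.lineGraph, hES]
    push_cast
    ring

end Paper
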